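/- Let ι be a finite type and for each i ∈ ι let m i and k i be nonempty finite types with decidable equality; let τ : ∀ i, Matrix (k i) (k i) ℂ be positive definite matrices of trace 1. Set d := card (Σ i, (m i × k i)) and σTr := Matrix.blockDiagonal' (fun i => ((card (k i) : ℝ)/d) • ((1 : Matrix (m i) (m i) ℂ) ⊗ₖ τ i)). For a matrix X on Σ i, (m i × k i) let X_i denote its i-th diagonal block, X_i((a,b),(a',b')) := X(⟨i,(a,b)⟩, ⟨i,(a',b')⟩). Define E_N(X) := Matrix.blockDiagonal' (fun i => T_i(X_i) ⊗ₖ 1) where T_i(Z)(a,a') := Σ_{b,b'} Z((a,b),(a',b')) · (τ i)(b',b), and E_{N*}(X) := Matrix.blockDiagonal' (fun i => S_i(X_i) ⊗ₖ τ i) where S_i(Z)(a,a') := Σ_b Z((a,b),(a',b)). Then for every matrix X on Σ i, (m i × k i): σTr^{1/2} * E_N(X) * σTr^{1/2} = E_{N*}(σTr^{1/2} * X * σTr^{1/2}), where σTr^{1/2} is the positive square root of σTr. -/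

import Mathlib

open Matrix Kronecker
open scoped ComplexOrder

/-- matrix square root via the continuous functional calculus -/
noncomputable def msqrt {n : Type*} [Fintype n] [DecidableEq n] (A : Matrix n n ℂ) :
    Matrix n n ℂ := cfc Real.sqrt A

section Blocks

variable {ι : Type*} [Fintype ι] [DecidableEq ι]
  {m k : ι → Type*} [∀ i, Fintype (m i)] [∀ i, Fintype (k i)]
  [∀ i, DecidableEq (m i)] [∀ i, DecidableEq (k i)]

/-- the `i`-th diagonal block of a matrix on `Σ i, (m i × k i)` -/
def blockOf (X : Matrix (Σ i, (m i × k i)) (Σ i, (m i × k i)) ℂ) (i : ι) :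
    Matrix (m i × k i) (m i × k i) ℂ :=
  Matrix.of fun p q => X ⟨i, p⟩ ⟨i, q⟩

/-- the conditional expectation `E_N` onto the decoherence-free algebra -/
noncomputable def condExp (τ : ∀ i, Matrix (k i) (k i) ℂ)
    (X : Matrix (Σ i, (m i × k i)) (Σ i, (m i × k i)) ℂ) :
    Matrix (Σ i, (m i × k i)) (Σ i, (m i × k i)) ℂ :=
  Matrix.blockDiagonal' fun i =>
    (Matrix.of fun a a' => ∑ b, ∑ b', blockOf X i (a, b) (a', b') * τ i b' b) ⊗ₖ
      (1 : Matrix (k i) (k i) ℂ)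

/-- the predual conditional expectation `E_{N*}` -/
noncomputable def condExpPredual (τ : ∀ i, Matrix (k i) (k i) ℂ)
    (X : Matrix (Σ i, (m i × k i)) (Σ i, (m i × k i)) ℂ) :
    Matrix (Σ i, (m i × k i)) (Σ i, (m i × k i)) ℂ :=
  Matrix.blockDiagonal' fun i =>
    (Matrix.of fun a a' => ∑ b, blockOf X i (a, b) (a', b)) ⊗ₖ τ i

/-- the reference state `σ_Tr` -/
noncomputable def sigmaTr (τ : ∀ i, Matrix (k i) (k i) ℂ) :
    Matrix (Σ i, (m i × k i)) (Σ i, (m i × k i)) ℂ :=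
  Matrix.blockDiagonal' fun i =>
    ((Fintype.card (k i) : ℝ) / (Fintype.card (Σ i, (m i × k i)) : ℝ)) •
      ((1 : Matrix (m i) (m i) ℂ) ⊗ₖ τ i)

end Blocks

/-! The square root of `σTr` is block diagonal with blocks `√(cᵢ) • (1 ⊗ τᵢ^{1/2})`, where
`cᵢ = card (k i) / d`: this matrix is positive semidefinite and squares to `σTr`. Conjugation by a
block-diagonal matrix acts blockwise, so the identity is one about a single block, with
`r = τᵢ^{1/2}`: on the left `(1 ⊗ r) (T ⊗ 1) (1 ⊗ r) = T ⊗ τᵢ`, and on the right the partial trace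
over the second factor of `(1 ⊗ r) Z (1 ⊗ r)` is `∑ b b', Z (a, b) (a', b') * (r * r) b' b`, by
cyclicity of the trace in that factor. -/

open scoped MatrixOrder

section BlockDiag

variable {α o : Type*} [NonUnitalNonAssocSemiring α] [Fintype o] [DecidableEq o]
  {m' n' p' : o → Type*} [∀ i, Fintype (n' i)]

theorem blockDiag'_blockDiagonal'_mul (D : ∀ i, Matrix (m' i) (n' i) α)
    (X : Matrix (Σ i, n' i) (Σ i, p' i) α) (i : o) :
    blockDiag' (blockDiagonal' D * X) i = D i * blockDiag' X i := by
  ext p q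
  simp only [blockDiag'_apply, mul_apply, ← Finset.univ_sigma_univ, Finset.sum_sigma]
  rw [Fintype.sum_eq_single i fun j hj => Finset.sum_eq_zero fun u _ => by
    rw [blockDiagonal'_apply_ne _ _ _ (Ne.symm hj), zero_mul]]
  simp

theorem blockDiag'_mul_blockDiagonal' (X : Matrix (Σ i, m' i) (Σ i, n' i) α)
    (D : ∀ i, Matrix (n' i) (p' i) α) (i : o) :
    blockDiag' (X * blockDiagonal' D) i = blockDiag' X i * D i := by
  ext p q
  simp only [blockDiag'_apply, mul_apply, ← Finset.univ_sigma_univ, Finset.sum_sigma]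
  rw [Fintype.sum_eq_single i fun j hj => Finset.sum_eq_zero fun u _ => by
    rw [blockDiagonal'_apply_ne _ _ _ hj, mul_zero]]
  simp

end BlockDiag

theorem blockOf_eq_blockDiag' {ι : Type*} [Fintype ι] [DecidableEq ι]
    {m k : ι → Type*} [∀ i, Fintype (m i)] [∀ i, Fintype (k i)]
    [∀ i, DecidableEq (m i)] [∀ i, DecidableEq (k i)]
    (X : Matrix (Σ i, (m i × k i)) (Σ i, (m i × k i)) ℂ) : blockOf X = blockDiag' X :=
  rfl

theorem Matrix.PosSemidef.blockDiagonal' {𝕜 ι : Type*} [RCLike 𝕜] [Fintype ι] [DecidableEq ι]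
    {n : ι → Type*} [∀ i, Fintype (n i)] [∀ i, DecidableEq (n i)]
    {D : ∀ i, Matrix (n i) (n i) 𝕜} (hD : ∀ i, (D i).PosSemidef) :
    (Matrix.blockDiagonal' D).PosSemidef := by
  choose A hA using fun i => CStarAlgebra.nonneg_iff_eq_star_mul_self.mp (hD i).nonneg
  rw [funext hA, blockDiagonal'_mul]
  simpa only [star_eq_conjTranspose, blockDiagonal'_conjTranspose] using
    posSemidef_conjTranspose_mul_self (Matrix.blockDiagonal' A)

theorem msqrt_mul_self {n : Type*} [Fintype n] [DecidableEq n] {B : Matrix n n ℂ}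
    (hB : B.PosSemidef) : msqrt (B * B) = B := by
  have hB₀ : 0 ≤ B := hB.nonneg
  rw [msqrt, ← cfcₙ_eq_cfc,
    ← CFC.sqrt_eq_real_sqrt _ (IsSelfAdjoint.of_nonneg hB₀).mul_self_nonneg, CFC.sqrt_mul_self B]

theorem msqrt_blockDiagonal'_smul_one_kronecker {ι : Type*} [Fintype ι] [DecidableEq ι]
    {m k : ι → Type*} [∀ i, Fintype (m i)] [∀ i, Fintype (k i)]
    [∀ i, DecidableEq (m i)] [∀ i, DecidableEq (k i)]
    {c : ι → ℝ} (hc : ∀ i, 0 ≤ c i) {ρ : ∀ i, Matrix (k i) (k i) ℂ}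
    (hρ : ∀ i, (ρ i).PosSemidef) :
    msqrt (blockDiagonal' fun i => c i • ((1 : Matrix (m i) (m i) ℂ) ⊗ₖ ρ i)) =
      blockDiagonal' fun i => √(c i) • ((1 : Matrix (m i) (m i) ℂ) ⊗ₖ CFC.sqrt (ρ i)) := by
  have hsqrt : ∀ i, (√(c i) • ((1 : Matrix (m i) (m i) ℂ) ⊗ₖ CFC.sqrt (ρ i))).PosSemidef :=
    fun i => (PosSemidef.one.kronecker (CFC.sqrt_nonneg (ρ i)).posSemidef).smul
      (Real.sqrt_nonneg (c i))
  refine (congrArg msqrt ?_).trans (msqrt_mul_self (PosSemidef.blockDiagonal' hsqrt))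
  rw [← blockDiagonal'_mul]
  congr 1
  funext i
  rw [smul_mul_smul_comm, ← mul_kronecker_mul, one_mul, CFC.sqrt_mul_sqrt_self _ (hρ i).nonneg,
    Real.mul_self_sqrt (hc i)]

section KroneckerBlock

variable {R : Type*} [CommSemiring R] {M K : Type*} [Fintype M] [Fintype K] [DecidableEq M]

theorem one_kronecker_mul_kronecker_one_mul [DecidableEq K] (r r' : Matrix K K R)
    (T : Matrix M M R) :
    ((1 : Matrix M M R) ⊗ₖ r) * (T ⊗ₖ 1) * (1 ⊗ₖ r') = T ⊗ₖ (r * r') := by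
  rw [← mul_kronecker_mul, ← mul_kronecker_mul, one_mul, mul_one, mul_one]

theorem one_kronecker_mul_mul_one_kronecker_apply (r r' : Matrix K K R)
    (Z : Matrix (M × K) (M × K) R) (a a' : M) (b b' : K) :
    (((1 : Matrix M M R) ⊗ₖ r) * Z * ((1 : Matrix M M R) ⊗ₖ r')) (a, b) (a', b') =
      ∑ c, ∑ c', r b c * Z (a, c) (a', c') * r' c' b' := by
  simp only [mul_apply, kroneckerMap_apply, one_apply, ite_mul, mul_ite, one_mul, zero_mul,
    mul_zero, Fintype.sum_prod_type, Finset.sum_ite_irrel, Finset.sum_const_zero,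
    Finset.sum_ite_eq, Finset.sum_ite_eq', Finset.mem_univ, ↓reduceIte, Finset.sum_mul]
  exact Finset.sum_comm

theorem sum_one_kronecker_mul_mul_one_kronecker_apply (r r' : Matrix K K R)
    (Z : Matrix (M × K) (M × K) R) (a a' : M) :
    ∑ b, (((1 : Matrix M M R) ⊗ₖ r) * Z * ((1 : Matrix M M R) ⊗ₖ r')) (a, b) (a', b) =
      ∑ b, ∑ b', Z (a, b) (a', b') * (r' * r) b' b := by
  simp_rw [one_kronecker_mul_mul_one_kronecker_apply, mul_apply, Finset.mul_sum]
  rw [Finset.sum_comm]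
  refine Finset.sum_congr rfl fun c _ => ?_
  rw [Finset.sum_comm]
  exact Finset.sum_congr rfl fun c' _ => Finset.sum_congr rfl fun b _ => by ring

theorem smul_one_kronecker_conj_condExp_block {S : Type*} [Monoid S] [DistribMulAction S R]
    [IsScalarTower S R R] [SMulCommClass S R R] [DecidableEq K] (s : S) {r τ : Matrix K K R}
    (hr : r * r = τ) (Z : Matrix (M × K) (M × K) R) :
    (s • ((1 : Matrix M M R) ⊗ₖ r)) *
        ((of fun a a' => ∑ b, ∑ b', Z (a, b) (a', b') * τ b' b) ⊗ₖ 1) *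
        (s • ((1 : Matrix M M R) ⊗ₖ r)) =
      (of fun a a' => ∑ b, ((s • ((1 : Matrix M M R) ⊗ₖ r)) * Z *
        (s • ((1 : Matrix M M R) ⊗ₖ r))) (a, b) (a', b)) ⊗ₖ τ := by
  simp only [smul_mul_assoc, mul_smul_comm, smul_smul, one_kronecker_mul_kronecker_one_mul, hr]
  rw [← smul_kronecker]
  congr 1
  ext a a'
  simp only [of_apply, Matrix.smul_apply, ← Finset.smul_sum,
    sum_one_kronecker_mul_mul_one_kronecker_apply, hr]

end KroneckerBlock

theorem sqrt_sigmaTr_condExp_eq_condExpPredual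
    {ι : Type*} [Fintype ι] [DecidableEq ι]
    {m k : ι → Type*} [∀ i, Fintype (m i)] [∀ i, Fintype (k i)]
    [∀ i, DecidableEq (m i)] [∀ i, DecidableEq (k i)]
    (τ : ∀ i, Matrix (k i) (k i) ℂ)
    (hτ : ∀ i, (τ i).PosDef)
    (X : Matrix (Σ i, (m i × k i)) (Σ i, (m i × k i)) ℂ) :
    msqrt (sigmaTr τ) * condExp τ X * msqrt (sigmaTr τ) =
      condExpPredual τ (msqrt (sigmaTr τ) * X * msqrt (sigmaTr τ)) := by
  have hσ : msqrt (sigmaTr τ : Matrix (Σ i, (m i × k i)) (Σ i, (m i × k i)) ℂ) =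
      blockDiagonal' fun i => √((Fintype.card (k i) : ℝ) / Fintype.card (Σ i, (m i × k i))) •
        ((1 : Matrix (m i) (m i) ℂ) ⊗ₖ CFC.sqrt (τ i)) :=
    msqrt_blockDiagonal'_smul_one_kronecker (fun i => by positivity) fun i => (hτ i).posSemidef
  rw [hσ, condExp, condExpPredual, ← blockDiagonal'_mul, ← blockDiagonal'_mul]
  congr 1
  funext i
  simp only [blockOf_eq_blockDiag', blockDiag'_mul_blockDiagonal', blockDiag'_blockDiagonal'_mul]
  exact smul_one_kronecker_conj_condExp_block _
    (CFC.sqrt_mul_sqrt_self _ (hτ i).posSemidef.nonneg) _
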